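/- arXiv:2303.03547 — 3 statements merged into one kernel-verified Lean document; each statement's English description precedes it below -/
import Mathlib

section
/- Let B be an n×n real symmetric positive semi-definite matrix with rank(B) ≥ n−1, partitioned as B = [[B11, b],[b^T, β]] with B11 of order n−1. If λ_min(B) < λ_min(B11), then λ_min(B) = β − b^T (B11 − λ_min(B) I)^{−1} b. -/
open Matrix

/-- Spectral (L2 operator) norm of a real matrix. -/
noncomputable def specNorm {ι κ : Type*} [Fintype ι] [Fintype κ] [DecidableEq κ]
    (A : Matrix ι κ ℝ) : ℝ :=
  ‖LinearMap.toContinuousLinearMap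
      (Matrix.toEuclideanLin A : EuclideanSpace ℝ κ →ₗ[ℝ] EuclideanSpace ℝ ι)‖

/-- Euclidean norm of a real vector. -/
noncomputable def enorm {ι : Type*} [Fintype ι] (v : ι → ℝ) : ℝ :=
  Real.sqrt (∑ i, v i ^ 2)

/-- The `j`-th largest eigenvalue (1-indexed, non-increasing order), realized as the
`j`-th largest root (with multiplicity) of the characteristic polynomial. -/
noncomputable def eigvalDesc {ι : Type*} [Fintype ι] [DecidableEq ι]
    (A : Matrix ι ι ℝ) (j : ℕ) : ℝ :=
  (A.charpoly.roots.sort (· ≤ ·)).getD (Fintype.card ι - j) 0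

/-- The smallest eigenvalue. -/
noncomputable def lmin {ι : Type*} [Fintype ι] [DecidableEq ι] (A : Matrix ι ι ℝ) : ℝ :=
  eigvalDesc A (Fintype.card ι)

/-- The `j`-th largest singular value (1-indexed, non-increasing order). -/
noncomputable def singvalDesc {ι κ : Type*} [Fintype ι] [Fintype κ] [DecidableEq κ]
    (A : Matrix ι κ ℝ) (j : ℕ) : ℝ :=
  Real.sqrt (eigvalDesc (Aᵀ * A) j)

/-- The smallest singular value. -/
noncomputable def smin {ι κ : Type*} [Fintype ι] [Fintype κ] [DecidableEq κ]
    (A : Matrix ι κ ℝ) : ℝ :=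
  Real.sqrt (lmin (Aᵀ * A))

/-!
`λ = lmin B` is a root of the characteristic polynomial of the symmetric matrix `B`, so `B - λ I`
is singular, while `B₁₁ - λ I` is invertible because `λ` lies below every eigenvalue of `B₁₁`.
Taking the Schur complement of `B₁₁ - λ I` in `B - λ I` gives
`0 = det (B₁₁ - λ I) * (β - λ - bᵀ (B₁₁ - λ I)⁻¹ b)`, and the second factor must vanish.
-/

namespace Matrix

theorem det_fromBlocks_of_unique {R m o : Type*} [CommRing R] [Fintype m] [DecidableEq m]
    [Fintype o] [DecidableEq o] [Unique o]
    (A : Matrix m m R) (b c : m → R) (d : R) (hA : IsUnit A.det) :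
    (fromBlocks A (of fun i (_ : o) => b i) (of fun (_ : o) j => c j) (of fun _ _ => d)).det
      = A.det * (d - c ⬝ᵥ (A⁻¹ *ᵥ b)) := by
  let := invertibleOfIsUnitDet A hA
  rw [det_fromBlocks₁₁, invOf_eq_nonsing_inv, det_unique (n := o)]
  congr 1
  simp only [sub_apply, of_apply, mul_apply, dotProduct, mulVec, Finset.mul_sum, Finset.sum_mul]
  rw [Finset.sum_comm]
  simp only [mul_comm, mul_left_comm]

variable {ι : Type*} [Fintype ι] [DecidableEq ι]

theorem mem_roots_charpoly_iff_det_sub_smul_one {R : Type*} [CommRing R] [IsDomain R]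
    (A : Matrix ι ι R) (μ : R) :
    μ ∈ A.charpoly.roots ↔ (A - μ • 1).det = 0 := by
  rw [Polynomial.mem_roots A.charpoly_monic.ne_zero, Polynomial.IsRoot, eval_charpoly,
    ← neg_sub, det_neg]
  simp [smul_one_eq_diagonal]

theorem IsHermitian.roots_charpoly_ne_zero {𝕜 : Type*} [RCLike 𝕜] [Nonempty ι]
    {A : Matrix ι ι 𝕜} (hA : A.IsHermitian) : A.charpoly.roots ≠ 0 := by
  simp [hA.roots_charpoly_eq_eigenvalues, Finset.univ_nonempty.ne_empty]

end Matrix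

section Lmin

variable {ι : Type*} [Fintype ι] [DecidableEq ι]

theorem lmin_eq_getD_zero (A : Matrix ι ι ℝ) :
    lmin A = (A.charpoly.roots.sort (· ≤ ·)).getD 0 0 := by
  simp [lmin, eigvalDesc]

theorem lmin_le_of_mem_roots {A : Matrix ι ι ℝ} {μ : ℝ} (hμ : μ ∈ A.charpoly.roots) :
    lmin A ≤ μ := by
  have hmem : μ ∈ A.charpoly.roots.sort (· ≤ ·) := (Multiset.mem_sort _).2 hμ
  have hsorted := Multiset.pairwise_sort A.charpoly.roots (· ≤ ·)
  rw [lmin_eq_getD_zero]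
  rcases hl : A.charpoly.roots.sort (· ≤ ·) with _ | ⟨a, t⟩
  · simp [hl] at hmem
  · rw [hl, List.pairwise_cons] at hsorted
    rw [hl] at hmem
    rcases List.mem_cons.1 hmem with rfl | h
    · simp
    · simpa using hsorted.1 μ h

theorem lmin_mem_roots {A : Matrix ι ι ℝ} (h : A.charpoly.roots ≠ 0) :
    lmin A ∈ A.charpoly.roots := by
  rw [lmin_eq_getD_zero]
  rcases hl : A.charpoly.roots.sort (· ≤ ·) with _ | ⟨a, t⟩
  · exact absurd (by simpa [hl] using (Multiset.sort_eq A.charpoly.roots (· ≤ ·)).symm) h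
  · have ha : a ∈ A.charpoly.roots.sort (· ≤ ·) := hl ▸ List.mem_cons_self
    simpa using (Multiset.mem_sort _).1 ha

end Lmin

theorem stmt1_general (p : ℕ) (B : Matrix (Fin p ⊕ Fin 1) (Fin p ⊕ Fin 1) ℝ)
    (B11 : Matrix (Fin p) (Fin p) ℝ) (b : Fin p → ℝ) (β : ℝ)
    (hBdef : B = fromBlocks B11 (of fun i (_ : Fin 1) => b i)
      (of fun (_ : Fin 1) j => b j) (of fun _ _ => β))
    (hB : B.PosSemidef)
    (hsep : lmin B < lmin B11) :
    lmin B = β - b ⬝ᵥ ((B11 - lmin B • 1)⁻¹ *ᵥ b) := by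
  set μ := lmin B
  have hsingular : (B - μ • 1).det = 0 :=
    (mem_roots_charpoly_iff_det_sub_smul_one B μ).1 (lmin_mem_roots hB.1.roots_charpoly_ne_zero)
  have hinvertible : IsUnit (B11 - μ • 1).det := isUnit_iff_ne_zero.2 fun h =>
    hsep.not_ge (lmin_le_of_mem_roots ((mem_roots_charpoly_iff_det_sub_smul_one B11 μ).2 h))
  have hshift : B - μ • 1 = fromBlocks (B11 - μ • 1) (of fun i (_ : Fin 1) => b i)
      (of fun (_ : Fin 1) j => b j) (of fun _ _ => β - μ) := by
    rw [hBdef, ← fromBlocks_one, fromBlocks_smul, sub_eq_add_neg, fromBlocks_neg, fromBlocks_add]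
    congr 1 <;> ext <;> simp [sub_eq_add_neg, Fin.fin_one_eq_zero]
  rw [hshift, det_fromBlocks_of_unique _ _ _ _ hinvertible] at hsingular
  linarith [(mul_eq_zero.1 hsingular).resolve_left hinvertible.ne_zero]

theorem stmt1 (p : ℕ) (B : Matrix (Fin p ⊕ Fin 1) (Fin p ⊕ Fin 1) ℝ)
    (B11 : Matrix (Fin p) (Fin p) ℝ) (b : Fin p → ℝ) (β : ℝ)
    (hBdef : B = fromBlocks B11 (of fun i (_ : Fin 1) => b i)
      (of fun (_ : Fin 1) j => b j) (of fun _ _ => β))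
    (hB : B.PosSemidef) (hrank : p ≤ B.rank)
    (hsep : lmin B < lmin B11) :
    lmin B = β - b ⬝ᵥ ((B11 - lmin B • 1)⁻¹ *ᵥ b) :=
  stmt1_general p B B11 b β hBdef hB hsep
end

section
/- Let B be an n×n real symmetric positive semi-definite matrix with rank(B) ≥ n−1, partitioned as B = [[B11, b],[b^T, β]] with B11 of order n−1. If β < λ_min(B11), then λ_min(B) = β − b^T (B11 − λ_min(B) I)^{−1} b ≥ 0. -/
open Matrix

/-!
Write `μ = λ_min(B)`. Since `μ` is an eigenvalue, `det (B - μ I) = 0`; since `B - μ I` is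
positive semidefinite, its last diagonal entry `β - μ` is nonnegative, so
`μ ≤ β < λ_min(B₁₁)` and `B₁₁ - μ I` is invertible. Expanding along the Schur complement,
`0 = det (B - μ I) = det (B₁₁ - μ I) * (β - μ - bᵀ (B₁₁ - μ I)⁻¹ b)`, so the second factor
vanishes. Finally `μ ≥ 0` because `B` is positive semidefinite.
-/

namespace Multiset

variable {α : Type*} [LinearOrder α]

lemma sort_getD_zero_le {s : Multiset α} {x : α} (hx : x ∈ s) (d : α) :
    (s.sort (· ≤ ·)).getD 0 d ≤ x := by
  rw [← mem_sort (r := (· ≤ ·))] at hx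
  have hsorted := pairwise_sort s (· ≤ ·)
  cases h : s.sort (· ≤ ·) with
  | nil => simp [h] at hx
  | cons a t =>
    rw [h] at hx hsorted
    rcases List.mem_cons.mp hx with rfl | hx
    · exact le_rfl
    · exact List.rel_of_pairwise_cons hsorted hx

lemma sort_getD_zero_mem {s : Multiset α} (hs : s ≠ 0) (d : α) :
    (s.sort (· ≤ ·)).getD 0 d ∈ s := by
  rw [← mem_sort (r := (· ≤ ·))]
  cases h : s.sort (· ≤ ·) with
  | nil => exact absurd (by simpa using congrArg List.length h) hs
  | cons a t => exact List.mem_cons_self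

end Multiset

namespace Matrix

lemma det_fromBlocks_replicateCol_replicateRow {R m o : Type*} [CommRing R]
    [Fintype m] [DecidableEq m] [Fintype o] [DecidableEq o] [Unique o]
    {A : Matrix m m R} (hA : IsUnit A.det) (b c : m → R) (D : Matrix o o R) :
    (fromBlocks A (replicateCol o b) (replicateRow o c) D).det =
      A.det * (D default default - c ⬝ᵥ (A⁻¹ *ᵥ b)) := by
  have := A.invertibleOfIsUnitDet hA
  rw [det_fromBlocks₁₁, det_unique (D - _), invOf_eq_nonsing_inv, Matrix.mul_assoc,
    ← replicateCol_mulVec]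
  rfl

variable {ι : Type*} [Fintype ι] [DecidableEq ι]

lemma mem_roots_charpoly_iff_mem_spectrum {K : Type*} [Field K] (A : Matrix ι ι K) (μ : K) :
    μ ∈ A.charpoly.roots ↔ μ ∈ spectrum K A := by
  rw [Polynomial.mem_roots A.charpoly_monic.ne_zero, mem_spectrum_iff_isRoot_charpoly]

lemma det_sub_smul_one_eq_zero_iff_mem_spectrum {K : Type*} [Field K] (A : Matrix ι ι K)
    (μ : K) : (A - μ • 1).det = 0 ↔ μ ∈ spectrum K A := by
  rw [spectrum.mem_iff, isUnit_iff_isUnit_det, isUnit_iff_ne_zero, not_not,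
    Algebra.algebraMap_eq_smul_one, ← neg_sub, det_neg, mul_eq_zero]
  simp

lemma lmin_eq_getD_sort_roots_charpoly (A : Matrix ι ι ℝ) :
    lmin A = (A.charpoly.roots.sort (· ≤ ·)).getD 0 0 := by
  rw [lmin, eigvalDesc, Nat.sub_self]

lemma lmin_le_of_mem_spectrum {A : Matrix ι ι ℝ} {μ : ℝ} (hμ : μ ∈ spectrum ℝ A) :
    lmin A ≤ μ := by
  rw [lmin_eq_getD_sort_roots_charpoly]
  exact Multiset.sort_getD_zero_le ((A.mem_roots_charpoly_iff_mem_spectrum μ).mpr hμ) 0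

lemma IsHermitian.lmin_mem_spectrum [Nonempty ι] {A : Matrix ι ι ℝ} (hA : A.IsHermitian) :
    lmin A ∈ spectrum ℝ A := by
  have hroots : A.charpoly.roots ≠ 0 := by
    simp [hA.roots_charpoly_eq_eigenvalues, Finset.univ_nonempty.ne_empty]
  rw [← A.mem_roots_charpoly_iff_mem_spectrum, lmin_eq_getD_sort_roots_charpoly]
  exact Multiset.sort_getD_zero_mem hroots 0

open scoped MatrixOrder in
lemma IsHermitian.posSemidef_sub_lmin_smul_one {A : Matrix ι ι ℝ} (hA : A.IsHermitian) :
    (A - lmin A • 1).PosSemidef := by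
  have h := (algebraMap_le_iff_le_spectrum (r := lmin A) (a := A) hA).mpr
    fun _ => lmin_le_of_mem_spectrum
  rwa [Algebra.algebraMap_eq_smul_one] at h

lemma PosSemidef.lmin_nonneg [Nonempty ι] {A : Matrix ι ι ℝ} (hA : A.PosSemidef) :
    0 ≤ lmin A :=
  (posSemidef_iff_isHermitian_and_spectrum_nonneg.mp hA).2 hA.isHermitian.lmin_mem_spectrum

end Matrix

theorem stmt2_general (p : ℕ) (B : Matrix (Fin p ⊕ Fin 1) (Fin p ⊕ Fin 1) ℝ)
    (B11 : Matrix (Fin p) (Fin p) ℝ) (b : Fin p → ℝ) (β : ℝ)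
    (hBdef : B = fromBlocks B11 (of fun i (_ : Fin 1) => b i)
      (of fun (_ : Fin 1) j => b j) (of fun _ _ => β))
    (hB : B.PosSemidef)
    (hsep : β < lmin B11) :
    lmin B = β - b ⬝ᵥ ((B11 - lmin B • 1)⁻¹ *ᵥ b) ∧ 0 ≤ lmin B := by
  set μ := lmin B
  have hshift : B - μ • 1 = fromBlocks (B11 - μ • 1) (replicateCol (Fin 1) b)
      (replicateRow (Fin 1) b) (of (fun _ _ => β) - μ • 1) := by
    rw [hBdef, ← fromBlocks_one, fromBlocks_smul, sub_eq_add_neg, fromBlocks_neg, fromBlocks_add]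
    simp only [smul_zero, neg_zero, add_zero, ← sub_eq_add_neg]
    rfl
  have hμβ : μ ≤ β := by
    have h := hB.isHermitian.posSemidef_sub_lmin_smul_one.diag_nonneg (i := Sum.inr 0)
    rw [hshift] at h
    simpa using h
  have hunit : IsUnit (B11 - μ • 1).det := by
    rw [isUnit_iff_ne_zero, Ne, det_sub_smul_one_eq_zero_iff_mem_spectrum]
    exact fun hμ => (lmin_le_of_mem_spectrum hμ).not_gt (hμβ.trans_lt hsep)
  have hsing := (B.det_sub_smul_one_eq_zero_iff_mem_spectrum μ).mpr
    hB.isHermitian.lmin_mem_spectrum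
  rw [hshift, det_fromBlocks_replicateCol_replicateRow hunit, mul_eq_zero] at hsing
  have hschur := hsing.resolve_left hunit.ne_zero
  simp only [Matrix.sub_apply, of_apply, Matrix.smul_apply, one_apply_eq, smul_eq_mul,
    mul_one] at hschur
  exact ⟨by linarith, hB.lmin_nonneg⟩

theorem stmt2 (p : ℕ) (B : Matrix (Fin p ⊕ Fin 1) (Fin p ⊕ Fin 1) ℝ)
    (B11 : Matrix (Fin p) (Fin p) ℝ) (b : Fin p → ℝ) (β : ℝ)
    (hBdef : B = fromBlocks B11 (of fun i (_ : Fin 1) => b i)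
      (of fun (_ : Fin 1) j => b j) (of fun _ _ => β))
    (hB : B.PosSemidef) (hrank : p ≤ B.rank)
    (hsep : β < lmin B11) :
    lmin B = β - b ⬝ᵥ ((B11 - lmin B • 1)⁻¹ *ᵥ b) ∧ 0 ≤ lmin B :=
  stmt2_general p B B11 b β hBdef hB hsep
end

section
/- Let B be an n×n real symmetric positive semi-definite matrix with rank(B) ≥ n−1, partitioned as B = [[B11, b],[b^T, β]] with B11 of order n−1. If β < λ_min(B11), then λ_min(B) ≥ β − b^T B11^{−1} b − β·‖B11^{−1} b‖₂² / (1 − β·‖B11^{−1}‖₂). -/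
open Matrix

/-- Euclidean norm of a real vector. -/
noncomputable def vecEnorm {ι : Type*} [Fintype ι] (v : ι → ℝ) : ℝ :=
  Real.sqrt (∑ i, v i ^ 2)

/-! The right-hand side `c` satisfies `c ≤ β < λ_min(B11)`. In an orthonormal eigenbasis `(μᵢ, vᵢ)`
of `B11`, with `gᵢ = vᵢ ⬝ b`, completing the square coordinatewise shows `xᵀ B x ≥ c ‖x‖²` as soon as
the secular inequality `∑ gᵢ² / (μᵢ - c) ≤ β - c` holds. For `μ ≥ λ_min(B11)` and `c ≤ β` one has
`1 / (μ - c) ≤ 1 / μ + β / (μ² (1 - β / λ_min(B11)))`, so the secular sum is at most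
`bᵀ B11⁻¹ b + β ‖B11⁻¹ b‖² / (1 - β ‖B11⁻¹‖₂) = β - c`, using `‖B11⁻¹‖₂ = 1 / λ_min(B11)`. -/

theorem Multiset.sort_getD_zero_le_s3 {α : Type*} [LinearOrder α] {s : Multiset α} {a : α}
    (d : α) (ha : a ∈ s) : (s.sort (· ≤ ·)).getD 0 d ≤ a := by
  have hsort := s.pairwise_sort (· ≤ ·)
  rw [← Multiset.mem_sort (r := (· ≤ ·))] at ha
  rcases hs : s.sort (· ≤ ·) with _ | ⟨x, l⟩
  · simp [hs] at ha
  · rw [hs] at hsort ha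
    rcases List.mem_cons.mp ha with rfl | h
    · rfl
    · exact (List.pairwise_cons.mp hsort).1 a h

theorem Multiset.sort_getD_zero_mem_s3 {α : Type*} [LinearOrder α] {s : Multiset α}
    (hs : s ≠ 0) (d : α) : (s.sort (· ≤ ·)).getD 0 d ∈ s := by
  rw [← Multiset.mem_sort (r := (· ≤ ·)), List.getD_eq_getElem]
  · exact List.getElem_mem _
  · rw [Multiset.length_sort, Multiset.card_pos]
    exact hs

theorem lmin_eq_sort_getD_zero {n : Type*} [Fintype n] [DecidableEq n] (A : Matrix n n ℝ) :
    lmin A = (A.charpoly.roots.sort (· ≤ ·)).getD 0 0 := by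
  rw [lmin, eigvalDesc, Nat.sub_self]

theorem lmin_of_isEmpty {n : Type*} [Fintype n] [DecidableEq n] [IsEmpty n]
    (A : Matrix n n ℝ) : lmin A = 0 := by
  simp [lmin_eq_sort_getD_zero, Matrix.charpoly, Matrix.det_isEmpty]

theorem vecEnorm_sq {ι : Type*} [Fintype ι] (v : ι → ℝ) : vecEnorm v ^ 2 = v ⬝ᵥ v := by
  rw [vecEnorm, Real.sq_sqrt (by positivity)]
  simp [dotProduct, sq]

theorem EuclideanSpace.real_norm_sq_eq_dotProduct {n : Type*} [Fintype n]
    (x : EuclideanSpace ℝ n) : ‖x‖ ^ 2 = x.ofLp ⬝ᵥ x.ofLp := by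
  rw [← real_inner_self_eq_norm_sq, EuclideanSpace.inner_eq_star_dotProduct, star_trivial]

theorem one_sub_mul_inv_pos {β l : ℝ} (hl : 0 < l) (hβl : β < l) : 0 < 1 - β * l⁻¹ := by
  rw [sub_pos, ← div_eq_mul_inv, div_lt_one hl]
  exact hβl

theorem mul_sq_le_add_of_lt {c μ ξ g t : ℝ} (h : c < μ) :
    c * ξ ^ 2 ≤ μ * ξ ^ 2 + 2 * t * (g * ξ) + t ^ 2 * (g ^ 2 / (μ - c)) := by
  have hμc : 0 < μ - c := sub_pos.2 h
  have hsq : 0 ≤ ((μ - c) * ξ + t * g) ^ 2 / (μ - c) := by positivity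
  have hexp : ((μ - c) * ξ + t * g) ^ 2 / (μ - c)
      = (μ - c) * ξ ^ 2 + 2 * t * (g * ξ) + t ^ 2 * (g ^ 2 / (μ - c)) := by
    field_simp
    ring
  linarith

theorem inv_sub_le_inv_add {β l μ c : ℝ} (hl : 0 < l) (hβl : β < l) (hlμ : l ≤ μ) (hcβ : c ≤ β) :
    (μ - c)⁻¹ ≤ μ⁻¹ + β * μ⁻¹ ^ 2 / (1 - β * l⁻¹) := by
  have hμ : 0 < μ := hl.trans_le hlμ
  have hd := one_sub_mul_inv_pos hl hβl
  set d := 1 - β * l⁻¹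
  have hld : l * d = l - β := by
    simp only [d]
    field_simp
  have hcd : c * d ≤ β := by
    rcases le_total 0 β with hβ | hβ <;> nlinarith
  -- `(μ d + β)(μ - c) - μ² d = μ (β - c d) - c β ≥ l (β - c d) - c β = l (β - c)`
  have key : μ ^ 2 * d ≤ (μ * d + β) * (μ - c) := by nlinarith
  rw [inv_le_iff_one_le_mul₀ (by linarith)]
  field_simp
  nlinarith

namespace Matrix

namespace IsHermitian

variable {n : Type*} [Fintype n] [DecidableEq n] {A : Matrix n n ℝ} (hA : A.IsHermitian)
include hA

theorem lmin_le_eigenvalues (i : n) : lmin A ≤ hA.eigenvalues i := by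
  rw [lmin_eq_sort_getD_zero]
  exact Multiset.sort_getD_zero_le_s3 _ (by simp [hA.roots_charpoly_eq_eigenvalues])

theorem exists_eigenvalues_eq_lmin [Nonempty n] : ∃ i, hA.eigenvalues i = lmin A := by
  have hne : A.charpoly.roots ≠ 0 := by
    simp [hA.roots_charpoly_eq_eigenvalues, Finset.univ_nonempty.ne_empty]
  have hmem := Multiset.sort_getD_zero_mem_s3 hne 0
  rw [← lmin_eq_sort_getD_zero, hA.roots_charpoly_eq_eigenvalues] at hmem
  simpa using hmem

theorem posDef_of_lmin_pos (hpos : 0 < lmin A) : A.PosDef :=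
  hA.posDef_iff_eigenvalues_pos.2 fun i => hpos.trans_le (hA.lmin_le_eigenvalues i)

theorem dotProduct_eq_sum_eigenvectorBasis (x y : n → ℝ) :
    x ⬝ᵥ y = ∑ i, (hA.eigenvectorBasis i ⬝ᵥ x) * (hA.eigenvectorBasis i ⬝ᵥ y) := by
  have h := hA.eigenvectorBasis.sum_inner_mul_inner (WithLp.toLp 2 x) (WithLp.toLp 2 y)
  simp only [EuclideanSpace.inner_eq_star_dotProduct, star_trivial] at h
  rw [dotProduct_comm x, ← h]
  exact Finset.sum_congr rfl fun i _ => by rw [dotProduct_comm y]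

theorem eigenvectorBasis_dotProduct_self (i : n) :
    hA.eigenvectorBasis i ⬝ᵥ hA.eigenvectorBasis i = 1 := by
  rw [← EuclideanSpace.real_norm_sq_eq_dotProduct, hA.eigenvectorBasis.orthonormal.1 i, one_pow]

theorem eigenvectorBasis_dotProduct_mulVec (i : n) (x : n → ℝ) :
    hA.eigenvectorBasis i ⬝ᵥ (A *ᵥ x) = hA.eigenvalues i * (hA.eigenvectorBasis i ⬝ᵥ x) := by
  rw [dotProduct_mulVec, ← mulVec_transpose, show Aᵀ = A from hA, mulVec_eigenvectorBasis,
    smul_dotProduct, smul_eq_mul]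

theorem eigenvectorBasis_dotProduct_inv_mulVec (hdet : IsUnit A.det) (i : n) (x : n → ℝ) :
    hA.eigenvectorBasis i ⬝ᵥ (A⁻¹ *ᵥ x) = (hA.eigenvalues i)⁻¹ * (hA.eigenvectorBasis i ⬝ᵥ x) := by
  have h := hA.eigenvectorBasis_dotProduct_mulVec i (A⁻¹ *ᵥ x)
  rw [mulVec_mulVec, mul_nonsing_inv _ hdet, one_mulVec] at h
  have hne : hA.eigenvalues i ≠ 0 := by
    have hdet₀ := hdet.ne_zero
    rw [hA.det_eq_prod_eigenvalues] at hdet₀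
    simpa using Finset.prod_ne_zero_iff.mp hdet₀ i (Finset.mem_univ i)
  rw [h, inv_mul_cancel_left₀ hne]

theorem le_lmin_of_forall_mul_dotProduct_le [Nonempty n] {c : ℝ}
    (h : ∀ x, c * (x ⬝ᵥ x) ≤ x ⬝ᵥ (A *ᵥ x)) : c ≤ lmin A := by
  obtain ⟨i, hi⟩ := hA.exists_eigenvalues_eq_lmin
  simpa [hA.eigenvectorBasis_dotProduct_mulVec, hA.eigenvectorBasis_dotProduct_self, hi]
    using h (hA.eigenvectorBasis i)

theorem specNorm_inv_eq_inv_lmin [Nonempty n] (hpos : 0 < lmin A) :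
    specNorm A⁻¹ = (lmin A)⁻¹ := by
  have hdet : IsUnit A.det := (isUnit_iff_isUnit_det A).1 (hA.posDef_of_lmin_pos hpos).isUnit
  have hle := hA.lmin_le_eigenvalues
  refine le_antisymm (ContinuousLinearMap.opNorm_le_bound _ (inv_nonneg.2 hpos.le) fun x => ?_) ?_
  · rw [← pow_le_pow_iff_left₀ (norm_nonneg _) (by positivity) two_ne_zero, mul_pow,
      EuclideanSpace.real_norm_sq_eq_dotProduct, EuclideanSpace.real_norm_sq_eq_dotProduct]
    change (A⁻¹ *ᵥ x.ofLp) ⬝ᵥ (A⁻¹ *ᵥ x.ofLp) ≤ _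
    rw [hA.dotProduct_eq_sum_eigenvectorBasis (A⁻¹ *ᵥ _),
      hA.dotProduct_eq_sum_eigenvectorBasis x.ofLp, Finset.mul_sum]
    refine Finset.sum_le_sum fun i _ => ?_
    rw [hA.eigenvectorBasis_dotProduct_inv_mulVec hdet, mul_mul_mul_comm, ← sq]
    have hξ := mul_self_nonneg (hA.eigenvectorBasis i ⬝ᵥ x.ofLp)
    have hμ := hpos.trans_le (hle i)
    gcongr
    exact hle i
  · obtain ⟨i, hi⟩ := hA.exists_eigenvalues_eq_lmin
    set v := hA.eigenvectorBasis i
    set T := LinearMap.toContinuousLinearMap (toEuclideanLin A⁻¹)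
    calc (lmin A)⁻¹ = v.ofLp ⬝ᵥ (A⁻¹ *ᵥ v.ofLp) := by
          rw [hA.eigenvectorBasis_dotProduct_inv_mulVec hdet, hA.eigenvectorBasis_dotProduct_self,
            hi, mul_one]
      _ = inner ℝ v (T v) := by
          rw [EuclideanSpace.inner_eq_star_dotProduct, star_trivial, dotProduct_comm]
          rfl
      _ ≤ ‖v‖ * ‖T v‖ := real_inner_le_norm _ _
      _ ≤ ‖T‖ := by simpa [v, hA.eigenvectorBasis.orthonormal.1 i] using T.le_opNorm v

theorem sum_sq_div_sub_le (hpos : 0 < lmin A) {β c : ℝ} (hβ : β < lmin A) (hcβ : c ≤ β)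
    (b : n → ℝ) :
    ∑ i, (hA.eigenvectorBasis i ⬝ᵥ b) ^ 2 / (hA.eigenvalues i - c)
      ≤ b ⬝ᵥ (A⁻¹ *ᵥ b) + β * vecEnorm (A⁻¹ *ᵥ b) ^ 2 / (1 - β * (lmin A)⁻¹) := by
  have hdet : IsUnit A.det := (isUnit_iff_isUnit_det A).1 (hA.posDef_of_lmin_pos hpos).isUnit
  rw [vecEnorm_sq, hA.dotProduct_eq_sum_eigenvectorBasis b,
    hA.dotProduct_eq_sum_eigenvectorBasis (A⁻¹ *ᵥ b)]
  simp only [hA.eigenvectorBasis_dotProduct_inv_mulVec hdet, Finset.sum_div, Finset.mul_sum,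
    ← Finset.sum_add_distrib]
  refine Finset.sum_le_sum fun i _ => ?_
  rw [div_eq_mul_inv]
  refine (mul_le_mul_of_nonneg_left (inv_sub_le_inv_add hpos hβ (hA.lmin_le_eigenvalues i) hcβ)
    (sq_nonneg _)).trans_eq (by ring)

end IsHermitian

variable {m : Type*} [Fintype m]

def bordered (A : Matrix m m ℝ) (b : m → ℝ) (β : ℝ) : Matrix (m ⊕ Fin 1) (m ⊕ Fin 1) ℝ :=
  fromBlocks A (of fun i (_ : Fin 1) => b i) (of fun (_ : Fin 1) j => b j) (of fun _ _ => β)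

theorem sumElim_dotProduct_bordered_mulVec (A : Matrix m m ℝ) (b : m → ℝ) (β : ℝ)
    (y : m → ℝ) (t : ℝ) :
    Sum.elim y (fun _ => t) ⬝ᵥ (bordered A b β *ᵥ Sum.elim y fun _ => t)
      = y ⬝ᵥ (A *ᵥ y) + 2 * t * (b ⬝ᵥ y) + β * t ^ 2 := by
  simp only [bordered, fromBlocks_mulVec, sumElim_dotProduct_sumElim, Sum.elim_comp_inl,
    Sum.elim_comp_inr, Sum.elim_add_add, dotProduct_add]
  simp only [dotProduct, mulVec, of_apply, Fin.sum_univ_one, Finset.mul_sum]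
  have h : ∀ i, y i * (b i * t) = t * (b i * y i) := fun i => by ring
  simp only [h, mul_assoc 2 t, ← Finset.mul_sum]
  ring

theorem IsHermitian.le_lmin_bordered [DecidableEq m] {A : Matrix m m ℝ} (hA : A.IsHermitian)
    (b : m → ℝ) {β c : ℝ} (hc : ∀ i, c < hA.eigenvalues i)
    (hsec : ∑ i, (hA.eigenvectorBasis i ⬝ᵥ b) ^ 2 / (hA.eigenvalues i - c) ≤ β - c) :
    c ≤ lmin (bordered A b β) := by
  have hH : (bordered A b β).IsHermitian := hA.fromBlocks (by ext; simp) (by ext; simp)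
  have : Nonempty (m ⊕ Fin 1) := ⟨Sum.inr 0⟩
  refine hH.le_lmin_of_forall_mul_dotProduct_le fun x => ?_
  obtain ⟨y, t, rfl⟩ : ∃ y t, x = Sum.elim y fun _ => t :=
    ⟨x ∘ Sum.inl, x (Sum.inr 0), by ext (i | j) <;> simp [Fin.fin_one_eq_zero]⟩
  rw [sumElim_dotProduct_bordered_mulVec, sumElim_dotProduct_sumElim]
  set ξ := fun i => hA.eigenvectorBasis i ⬝ᵥ y
  set g := fun i => hA.eigenvectorBasis i ⬝ᵥ b
  have hyy : y ⬝ᵥ y = ∑ i, ξ i ^ 2 := by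
    simp only [hA.dotProduct_eq_sum_eigenvectorBasis y y, sq, ξ]
  have hyAy : y ⬝ᵥ (A *ᵥ y) = ∑ i, hA.eigenvalues i * ξ i ^ 2 := by
    rw [hA.dotProduct_eq_sum_eigenvectorBasis y]
    exact Finset.sum_congr rfl fun i _ => by rw [hA.eigenvectorBasis_dotProduct_mulVec]; ring
  have hby : b ⬝ᵥ y = ∑ i, g i * ξ i := hA.dotProduct_eq_sum_eigenvectorBasis b y
  have htt : ((fun _ => t : Fin 1 → ℝ) ⬝ᵥ fun _ => t) = t ^ 2 := by simp [dotProduct, sq]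
  have hsum := Finset.sum_le_sum fun i (_ : i ∈ Finset.univ) =>
    mul_sq_le_add_of_lt (ξ := ξ i) (g := g i) (t := t) (hc i)
  simp only [Finset.sum_add_distrib, ← Finset.mul_sum] at hsum
  rw [hyy, hyAy, hby, htt]
  linarith [mul_le_mul_of_nonneg_left hsec (sq_nonneg t)]

end Matrix

theorem stmt3_general (p : ℕ) (B : Matrix (Fin p ⊕ Fin 1) (Fin p ⊕ Fin 1) ℝ)
    (B11 : Matrix (Fin p) (Fin p) ℝ) (b : Fin p → ℝ) (β : ℝ)
    (hBdef : B = fromBlocks B11 (of fun i (_ : Fin 1) => b i)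
      (of fun (_ : Fin 1) j => b j) (of fun _ _ => β))
    (hB : B.PosSemidef)
    (hsep : β < lmin B11) :
    lmin B ≥ β - b ⬝ᵥ (B11⁻¹ *ᵥ b)
      - β * vecEnorm (B11⁻¹ *ᵥ b) ^ 2 / (1 - β * specNorm B11⁻¹) := by
  subst hBdef
  have hβ : 0 ≤ β := by
    simpa [dotProduct, mulVec] using hB.dotProduct_mulVec_nonneg (Pi.single (Sum.inr 0) 1)
  have hA : B11.IsHermitian := (isHermitian_fromBlocks_iff.1 hB.1).1
  have hl : 0 < lmin B11 := hβ.trans_lt hsep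
  have : Nonempty (Fin p) :=
    (isEmpty_or_nonempty _).resolve_left fun _ => hl.ne' (lmin_of_isEmpty B11)
  rw [hA.specNorm_inv_eq_inv_lmin hl, ge_iff_le]
  set c := β - b ⬝ᵥ (B11⁻¹ *ᵥ b) - β * vecEnorm (B11⁻¹ *ᵥ b) ^ 2 / (1 - β * (lmin B11)⁻¹)
  have hcβ : c ≤ β := by
    have h₁ := (hA.posDef_of_lmin_pos hl).inv.posSemidef.dotProduct_mulVec_nonneg b
    have hd := one_sub_mul_inv_pos hl hsep
    have h₂ : 0 ≤ β * vecEnorm (B11⁻¹ *ᵥ b) ^ 2 / (1 - β * (lmin B11)⁻¹) := by positivity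
    rw [star_trivial] at h₁
    linarith
  exact hA.le_lmin_bordered b (fun i => hcβ.trans_lt (hsep.trans_le (hA.lmin_le_eigenvalues i)))
    ((hA.sum_sq_div_sub_le hl hsep hcβ b).trans_eq (by ring))

theorem stmt3 (p : ℕ) (B : Matrix (Fin p ⊕ Fin 1) (Fin p ⊕ Fin 1) ℝ)
    (B11 : Matrix (Fin p) (Fin p) ℝ) (b : Fin p → ℝ) (β : ℝ)
    (hBdef : B = fromBlocks B11 (of fun i (_ : Fin 1) => b i)
      (of fun (_ : Fin 1) j => b j) (of fun _ _ => β))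
    (hB : B.PosSemidef) (hrank : p ≤ B.rank)
    (hsep : β < lmin B11) :
    lmin B ≥ β - b ⬝ᵥ (B11⁻¹ *ᵥ b)
      - β * vecEnorm (B11⁻¹ *ᵥ b) ^ 2 / (1 - β * specNorm B11⁻¹) :=
  stmt3_general p B B11 b β hBdef hB hsep
end
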